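/- arXiv:math/0410150 — 3 statements merged into one kernel-verified Lean document; each statement's English description precedes it below -/
import Mathlib

section
/- Let q ∈ k be a primitive n-th root of unity with n > 1. Then S_m(q) = Σ_{σ ∈ S_m} q^{τ(σ)} = 0 whenever m ≥ n, and S_m(q) ≠ 0 whenever 0 < m < n. -/
/-!
Inserting the value `v` at the last position of a permutation `π` of `Fin m` creates exactly
`m - v` new inversions, and every permutation of `Fin (m + 1)` arises uniquely this way. Hence
`S_{m+1}(q) = (1 + q + ⋯ + q^m) S_m(q)`, so `S_m(q) = ∏_{i < m} (1 + q + ⋯ + q^i)`. For a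
primitive `n`-th root of unity `q`, the factor `1 + q + ⋯ + q^i` vanishes exactly when `n ∣ i + 1`.
-/

/-- The number of inversions `τ(σ)` of a permutation. -/
def invCount {m : ℕ} (σ : Equiv.Perm (Fin m)) : ℕ :=
  (Finset.univ.filter fun p : Fin m × Fin m => p.1 < p.2 ∧ σ p.2 < σ p.1).card

/-- `S_m(q) = Σ_{σ ∈ S_m} q^{τ(σ)}`. -/
def Spoly (k : Type*) [Field k] (q : k) (m : ℕ) : k :=
  ∑ σ : Equiv.Perm (Fin m), q ^ invCount σ

open Finset Equiv

namespace Equiv.Perm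

variable {m : ℕ}

noncomputable def snocSuccAbove (v : Fin (m + 1)) (π : Perm (Fin m)) : Perm (Fin (m + 1)) :=
  ofBijective (Fin.snoc (fun i => v.succAbove (π i)) v) <| Finite.injective_iff_bijective.mp <|
    Fin.snoc_injective_of_injective (v.succAbove_right_injective.comp π.injective)
      fun ⟨i, hi⟩ => v.succAbove_ne (π i) hi

@[simp]
lemma snocSuccAbove_castSucc (v : Fin (m + 1)) (π : Perm (Fin m)) (i : Fin m) :
    snocSuccAbove v π i.castSucc = v.succAbove (π i) := by
  simp [snocSuccAbove]

@[simp]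
lemma snocSuccAbove_last (v : Fin (m + 1)) (π : Perm (Fin m)) :
    snocSuccAbove v π (Fin.last m) = v := by
  simp [snocSuccAbove]

lemma snocSuccAbove_bijective :
    Function.Bijective fun p : Fin (m + 1) × Perm (Fin m) => snocSuccAbove p.1 p.2 := by
  rw [Fintype.bijective_iff_injective_and_card]
  refine ⟨fun ⟨v, π⟩ ⟨v', π'⟩ h => ?_, by simp [Fintype.card_perm, Nat.factorial_succ]⟩
  obtain rfl : v = v' := by simpa using DFunLike.congr_fun h (Fin.last m)
  obtain rfl : π = π' := Equiv.ext fun i => v.succAbove_right_injective <| by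
    simpa using DFunLike.congr_fun h i.castSucc
  rfl

end Equiv.Perm

open Equiv.Perm

lemma invCount_eq_sum {m : ℕ} (σ : Perm (Fin m)) :
    invCount σ = ∑ j, ∑ i, if i < j ∧ σ j < σ i then 1 else 0 := by
  rw [invCount, card_filter, ← univ_product_univ, sum_product_right]

lemma card_filter_lt_succAbove {m : ℕ} (v : Fin (m + 1)) :
    #{i : Fin m | v < v.succAbove i} = m - v := by
  have h := Fin.sum_univ_succAbove (fun y : Fin (m + 1) => if v < y then 1 else 0) v
  simp only [lt_irrefl, if_false, zero_add, sum_boole, Nat.cast_id] at h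
  rw [← h, filter_lt_eq_Ioi, Fin.card_Ioi]
  omega

lemma invCount_snocSuccAbove {m : ℕ} (v : Fin (m + 1)) (π : Perm (Fin m)) :
    invCount (snocSuccAbove v π) = invCount π + (m - v) := by
  rw [invCount_eq_sum, invCount_eq_sum, Fin.sum_univ_castSucc]
  congr 1
  · refine sum_congr rfl fun j _ => ?_
    rw [Fin.sum_univ_castSucc, if_neg fun h => (Fin.castSucc_lt_last j).not_gt h.1, add_zero]
    simp only [snocSuccAbove_castSucc, Fin.castSucc_lt_castSucc_iff,
      Fin.succAbove_lt_succAbove_iff]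
  · rw [Fin.sum_univ_castSucc, if_neg fun h => lt_irrefl _ h.1, add_zero,
      ← card_filter_lt_succAbove v, card_filter]
    simp only [snocSuccAbove_castSucc, snocSuccAbove_last, Fin.castSucc_lt_last, true_and]
    exact Equiv.sum_comp π fun i => if v < v.succAbove i then 1 else 0

lemma Spoly_succ {k : Type*} [Field k] (q : k) (m : ℕ) :
    Spoly k q (m + 1) = (∑ j ∈ range (m + 1), q ^ j) * Spoly k q m := by
  rw [Spoly, ← snocSuccAbove_bijective.sum_comp, Fintype.sum_prod_type]
  simp only [invCount_snocSuccAbove, pow_add, ← mul_sum, ← sum_mul, Spoly]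
  rw [mul_comm]
  congr 1
  rw [Fin.sum_univ_eq_sum_range (fun v => q ^ (m - v)), ← sum_range_reflect]
  refine sum_congr rfl fun j hj => ?_
  have := mem_range.mp hj
  congr 1
  omega

lemma Spoly_eq_prod_geom_sum {k : Type*} [Field k] (q : k) (m : ℕ) :
    Spoly k q m = ∏ i ∈ range m, ∑ j ∈ range (i + 1), q ^ j := by
  induction m with
  | zero => simp [Spoly, invCount]
  | succ m ih => rw [Spoly_succ, ih, prod_range_succ, mul_comm]

lemma IsPrimitiveRoot.geom_sum_ne_zero {R : Type*} [CommRing R] {ζ : R} {n i : ℕ}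
    (hζ : IsPrimitiveRoot ζ n) (hi₀ : 0 < i) (hin : i < n) : ∑ j ∈ range i, ζ ^ j ≠ 0 := by
  intro h
  have := geom_sum_mul ζ i
  rw [h, zero_mul, eq_comm, sub_eq_zero] at this
  exact hζ.pow_ne_one_of_pos_of_lt hi₀.ne' hin this

/-- If `q` is a primitive `n`-th root of unity, `n > 1`, then `S_m(q) = 0` for `m ≥ n`
and `S_m(q) ≠ 0` for `0 < m < n`. -/
theorem stmt_4 {k : Type*} [Field k] {n : ℕ} (q : k) (hq : IsPrimitiveRoot q n)
    (hn : 1 < n) (m : ℕ) :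
    (n ≤ m → Spoly k q m = 0) ∧ (0 < m → m < n → Spoly k q m ≠ 0) := by
  rw [Spoly_eq_prod_geom_sum]
  refine ⟨fun hnm => prod_eq_zero (i := n - 1) (mem_range.mpr (by omega)) ?_,
    fun _ hmn => prod_ne_zero_iff.mpr fun i hi => hq.geom_sum_ne_zero i.succ_pos ?_⟩
  · rw [Nat.sub_add_cancel hn.le]
    exact hq.geom_sum_eq_zero hn
  · have := mem_range.mp hi
    omega
end

section
/- Let H = ⊕_{i≥0} H_{(i)} be a graded Hopf algebra over k with B = H_{(0)} and M = H_{(1)}. Then M is a B-Hopf bimodule, where the actions are α⁻ = π₁∘μ∘(ι₀⊗ι₁), α⁺ = π₁∘μ∘(ι₁⊗ι₀) and the coactions are δ⁻ = (π₀⊗π₁)∘Δ∘ι₁, δ⁺ = (π₁⊗π₀)∘Δ∘ι₁. -/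
/-!
Write `H_{(a,b)}` for the image of `H_{(a)} ⊗ H_{(b)}` in `H ⊗ H`. Since `Δ` respects the
grading, `Δ b ∈ H_{(0,0)}` for `b ∈ B` and `Δ m = x + y` with `x = δ⁻ m ∈ H_{(0,1)}` and
`y = δ⁺ m ∈ H_{(1,0)}` for `m ∈ M`. A map `f ⊗ g` evaluated on `H_{(a,b)}` only sees `f` on
`H_{(a)}` and `g` on `H_{(b)}`, so the projections `π_c ⊗ π_d` act on `H_{(a,b)}` as the
identity or as zero. Everything follows by applying suitable projections to the
multiplicativity, counitality and coassociativity of `Δ`: e.g. `(π₀ ⊗ π₀ ⊗ π₁)` applied to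
coassociativity of `Δ m` kills the `y`-terms and yields coassociativity of `δ⁻`.
-/

open TensorProduct Coalgebra

namespace GradedBialgebra

variable {k : Type*} [CommSemiring k]

theorem assoc_map_comp_comul_map {C M₁ M₂ M₃ : Type*} [AddCommMonoid C] [Module k C]
    [Coalgebra k C] [AddCommMonoid M₁] [Module k M₁] [AddCommMonoid M₂] [Module k M₂]
    [AddCommMonoid M₃] [Module k M₃]
    (f : C →ₗ[k] M₁) (g : C →ₗ[k] M₂) (h : C →ₗ[k] M₃) (c : C) :
    TensorProduct.assoc k M₁ M₂ M₃ (map (map f g ∘ₗ comul) h (comul c))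
      = map f (map g h ∘ₗ comul) (comul c) := by
  have := congr_arg (map f (map g h)) (coassoc_apply (R := k) c)
  rwa [map_map_assoc, LinearMap.rTensor, LinearMap.lTensor, ← LinearMap.comp_apply (map _ h),
    ← LinearMap.comp_apply (map f _), ← map_comp, ← map_comp, LinearMap.comp_id,
    LinearMap.comp_id] at this

section Module

variable {H : Type*} [AddCommMonoid H] [Module k H] (gr : ℕ → Submodule k H)

abbrev tensorComponent (a b : ℕ) : Submodule k (H ⊗[k] H) :=
  LinearMap.range (map (gr a).subtype (gr b).subtype)

variable {gr} {M : Type*} [AddCommMonoid M] [Module k M] {a b : ℕ} {z : H ⊗[k] H}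

theorem map_eq_map_of_mem_tensorComponent {N : Type*} [AddCommMonoid N] [Module k N]
    {f f' : H →ₗ[k] M} {g g' : H →ₗ[k] N}
    (hf : ∀ x ∈ gr a, f x = f' x) (hg : ∀ y ∈ gr b, g y = g' y)
    (hz : z ∈ tensorComponent gr a b) : map f g z = map f' g' z := by
  obtain ⟨w, rfl⟩ := hz
  simp only [← LinearMap.comp_apply, ← map_comp]
  congr 2 <;> ext ⟨x, hx⟩
  exacts [hf x hx, hg x hx]

variable {π : ℕ → H →ₗ[k] H}

section Projection

variable (hπ_id : ∀ n : ℕ, ∀ x ∈ gr n, π n x = x)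
include hπ_id

theorem map_proj_left (g : H →ₗ[k] M) (hz : z ∈ tensorComponent gr a b) :
    map (π a) g z = map LinearMap.id g z :=
  map_eq_map_of_mem_tensorComponent (hπ_id a) (fun _ _ => rfl) hz

theorem map_proj_right (f : H →ₗ[k] M) (hz : z ∈ tensorComponent gr a b) :
    map f (π b) z = map f LinearMap.id z :=
  map_eq_map_of_mem_tensorComponent (fun _ _ => rfl) (hπ_id b) hz

theorem map_proj_proj (hz : z ∈ tensorComponent gr a b) : map (π a) (π b) z = z := by
  rw [map_proj_left hπ_id _ hz, map_proj_right hπ_id _ hz, map_id, LinearMap.id_apply]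

end Projection

section Orthogonality

variable (hπ_orth : ∀ m n : ℕ, m ≠ n → ∀ x ∈ gr n, π m x = 0)
include hπ_orth

theorem map_proj_left_eq_zero {c : ℕ} (g : H →ₗ[k] M) (hc : c ≠ a)
    (hz : z ∈ tensorComponent gr a b) : map (π c) g z = 0 := by
  rw [map_eq_map_of_mem_tensorComponent (f' := 0) (hπ_orth c a hc) (fun _ _ => rfl) hz,
    map_zero_left, LinearMap.zero_apply]

theorem map_proj_right_eq_zero {d : ℕ} (f : H →ₗ[k] M) (hd : d ≠ b)
    (hz : z ∈ tensorComponent gr a b) : map f (π d) z = 0 := by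
  rw [map_eq_map_of_mem_tensorComponent (g' := 0) (fun _ _ => rfl) (hπ_orth d b hd) hz,
    map_zero_right, LinearMap.zero_apply]

end Orthogonality

end Module

section Algebra

variable {H : Type*} [Semiring H] [Algebra k H] {gr : ℕ → Submodule k H}

theorem mul_mem_tensorComponent (hmul : ∀ i j : ℕ, ∀ x ∈ gr i, ∀ y ∈ gr j, x * y ∈ gr (i + j))
    {a b c d : ℕ} {z w : H ⊗[k] H} (hz : z ∈ tensorComponent gr a b)
    (hw : w ∈ tensorComponent gr c d) : z * w ∈ tensorComponent gr (a + c) (b + d) := by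
  have key : tensorComponent gr a b * tensorComponent gr c d
      ≤ tensorComponent gr (a + c) (b + d) := by
    simp only [tensorComponent]
    rw [← mapIncl, ← mapIncl, ← mapIncl]
    simp only [range_mapIncl, Submodule.map₂_eq_span_image2, Submodule.span_mul_span,
      Submodule.span_le]
    rintro _ ⟨_, ⟨x, hx, y, hy, rfl⟩, _, ⟨x', hx', y', hy', rfl⟩, rfl⟩
    exact Submodule.subset_span ⟨x * x', hmul _ _ x hx x' hx', y * y', hmul _ _ y hy y' hy',
      (Algebra.TensorProduct.tmul_mul_tmul x x' y y').symm⟩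
  exact key (Submodule.mul_mem_mul hz hw)

end Algebra

section Bialgebra

variable {H : Type*} [Semiring H] [Bialgebra k H] {gr : ℕ → Submodule k H} {π : ℕ → H →ₗ[k] H}
  (hΔ : ∀ n : ℕ, ∀ x ∈ gr n, comul (R := k) x ∈
      ⨆ p ∈ Finset.HasAntidiagonal.antidiagonal n,
        LinearMap.range (TensorProduct.map (gr p.1).subtype (gr p.2).subtype))
  (hπ_id : ∀ n : ℕ, ∀ x ∈ gr n, π n x = x)
  (hπ_orth : ∀ m n : ℕ, m ≠ n → ∀ x ∈ gr n, π m x = 0)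
  (hε : ∀ n : ℕ, 0 < n → ∀ x ∈ gr n, counit (R := k) x = 0)
  {b m : H}

include hΔ in
theorem comul_mem_tensorComponent_zero_zero (hb : b ∈ gr 0) :
    comul (R := k) b ∈ tensorComponent gr 0 0 := by
  have h := hΔ 0 b hb
  have e : Finset.HasAntidiagonal.antidiagonal (0 : ℕ) = {(0, 0)} := by decide
  rwa [e, Finset.iSup_singleton] at h

include hΔ hπ_id in
theorem map_proj_comul_of_mem_zero (hb : b ∈ gr 0) :
    map (π 0) (π 0) (comul (R := k) b) = comul b :=
  map_proj_proj hπ_id (comul_mem_tensorComponent_zero_zero hΔ hb)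

include hΔ hπ_id hπ_orth in
theorem exists_comul_eq_add (hm : m ∈ gr 1) :
    ∃ x ∈ tensorComponent gr 0 1, ∃ y ∈ tensorComponent gr 1 0, comul (R := k) m = x + y ∧
      map (π 0) (π 1) (comul m) = x ∧ map (π 1) (π 0) (comul m) = y := by
  have e : Finset.HasAntidiagonal.antidiagonal (1 : ℕ) = {(0, 1), (1, 0)} := by decide
  have h := hΔ 1 m hm
  rw [e, Finset.iSup_insert, Finset.iSup_singleton] at h
  obtain ⟨x, hx, y, hy, hxy⟩ := Submodule.mem_sup.mp h
  refine ⟨x, hx, y, hy, hxy.symm, ?_, ?_⟩ <;> rw [← hxy, map_add]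
  · rw [map_proj_proj hπ_id hx, map_proj_left_eq_zero hπ_orth _ zero_ne_one hy, add_zero]
  · rw [map_proj_proj hπ_id hy, map_proj_left_eq_zero hπ_orth _ one_ne_zero hx, zero_add]

include hΔ hπ_id hπ_orth in
theorem map_proj_comul_mul_of_mem
    (hmul : ∀ i j : ℕ, ∀ x ∈ gr i, ∀ y ∈ gr j, x * y ∈ gr (i + j))
    (hb : b ∈ gr 0) (hm : m ∈ gr 1) :
    map (π 0) (π 1) (comul (R := k) (b * m)) = comul b * map (π 0) (π 1) (comul m) ∧
    map (π 0) (π 1) (comul (R := k) (m * b)) = map (π 0) (π 1) (comul m) * comul b ∧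
    map (π 1) (π 0) (comul (R := k) (b * m)) = comul b * map (π 1) (π 0) (comul m) ∧
    map (π 1) (π 0) (comul (R := k) (m * b)) = map (π 1) (π 0) (comul m) * comul b := by
  obtain ⟨x, hx, y, hy, hxy, hx_eq, hy_eq⟩ := exists_comul_eq_add hΔ hπ_id hπ_orth hm
  have hb' := comul_mem_tensorComponent_zero_zero hΔ hb
  have hbx : comul b * x ∈ tensorComponent gr 0 1 := by
    simpa only [add_zero] using mul_mem_tensorComponent hmul hb' hx
  have hby : comul b * y ∈ tensorComponent gr 1 0 := by
    simpa only [add_zero] using mul_mem_tensorComponent hmul hb' hy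
  have hxb : x * comul b ∈ tensorComponent gr 0 1 := by
    simpa only [add_zero] using mul_mem_tensorComponent hmul hx hb'
  have hyb : y * comul b ∈ tensorComponent gr 1 0 := by
    simpa only [add_zero] using mul_mem_tensorComponent hmul hy hb'
  refine ⟨?_, ?_, ?_, ?_⟩
  · rw [Bialgebra.comul_mul, hx_eq, hxy, mul_add, map_add, map_proj_proj hπ_id hbx,
      map_proj_left_eq_zero hπ_orth _ zero_ne_one hby, add_zero]
  · rw [Bialgebra.comul_mul, hx_eq, hxy, add_mul, map_add, map_proj_proj hπ_id hxb,
      map_proj_left_eq_zero hπ_orth _ zero_ne_one hyb, add_zero]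
  · rw [Bialgebra.comul_mul, hy_eq, hxy, mul_add, map_add, map_proj_proj hπ_id hby,
      map_proj_left_eq_zero hπ_orth _ one_ne_zero hbx, zero_add]
  · rw [Bialgebra.comul_mul, hy_eq, hxy, add_mul, map_add, map_proj_proj hπ_id hyb,
      map_proj_left_eq_zero hπ_orth _ one_ne_zero hxb, zero_add]

include hΔ hπ_id hπ_orth hε in
theorem lid_map_counit_proj_comul (hm : m ∈ gr 1) :
    TensorProduct.lid k H (map counit LinearMap.id (map (π 0) (π 1) (comul (R := k) m))) = m := by
  obtain ⟨x, hx, y, hy, hxy, hx_eq, -⟩ := exists_comul_eq_add hΔ hπ_id hπ_orth hm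
  have hcounit := rTensor_counit_comul (R := k) m
  rw [LinearMap.rTensor, hxy, map_add, map_eq_map_of_mem_tensorComponent (f' := 0) (hε 1 one_pos)
    (fun _ _ => rfl) hy, map_zero_left, LinearMap.zero_apply, add_zero] at hcounit
  rw [hx_eq, hcounit, lid_tmul, one_smul]

include hΔ hπ_id hπ_orth hε in
theorem rid_map_counit_proj_comul (hm : m ∈ gr 1) :
    TensorProduct.rid k H (map LinearMap.id counit (map (π 1) (π 0) (comul (R := k) m))) = m := by
  obtain ⟨x, hx, y, hy, hxy, -, hy_eq⟩ := exists_comul_eq_add hΔ hπ_id hπ_orth hm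
  have hcounit := lTensor_counit_comul (R := k) m
  rw [LinearMap.lTensor, hxy, map_add, map_eq_map_of_mem_tensorComponent (g' := 0)
    (fun _ _ => rfl) (hε 1 one_pos) hx, map_zero_right, LinearMap.zero_apply, zero_add] at hcounit
  rw [hy_eq, hcounit, rid_tmul, one_smul]

include hΔ hπ_id hπ_orth in
theorem assoc_map_comul_proj_comul_left (hm : m ∈ gr 1) :
    TensorProduct.assoc k H H H (map comul LinearMap.id (map (π 0) (π 1) (comul (R := k) m)))
      = map LinearMap.id (map (π 0) (π 1) ∘ₗ comul) (map (π 0) (π 1) (comul (R := k) m)) := by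
  obtain ⟨x, hx, y, hy, hxy, hx_eq, -⟩ := exists_comul_eq_add hΔ hπ_id hπ_orth hm
  have hcoassoc := assoc_map_comp_comul_map (π 0) (π 0) (π 1) m
  rw [hxy, map_add, map_add, map_add,
    map_eq_map_of_mem_tensorComponent (f' := comul) (g' := LinearMap.id)
      (fun _ hu => map_proj_comul_of_mem_zero hΔ hπ_id hu) (hπ_id 1) hx,
    map_proj_right_eq_zero hπ_orth _ one_ne_zero hy, map_proj_left hπ_id _ hx,
    map_proj_left_eq_zero hπ_orth _ zero_ne_one hy, map_zero, add_zero, add_zero] at hcoassoc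
  rwa [hx_eq]

include hΔ hπ_id hπ_orth in
theorem assoc_map_comul_proj_comul_right (hm : m ∈ gr 1) :
    TensorProduct.assoc k H H H
        (map (map (π 1) (π 0) ∘ₗ comul) LinearMap.id (map (π 1) (π 0) (comul (R := k) m)))
      = map LinearMap.id comul (map (π 1) (π 0) (comul (R := k) m)) := by
  obtain ⟨x, hx, y, hy, hxy, -, hy_eq⟩ := exists_comul_eq_add hΔ hπ_id hπ_orth hm
  have hcoassoc := assoc_map_comp_comul_map (π 1) (π 0) (π 0) m
  rw [hxy, map_add, map_add, map_add, map_proj_right_eq_zero hπ_orth _ zero_ne_one hx,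
    map_proj_right hπ_id _ hy, map_proj_left_eq_zero hπ_orth _ one_ne_zero hx,
    map_eq_map_of_mem_tensorComponent (f' := LinearMap.id) (g' := comul) (hπ_id 1)
      (fun _ hu => map_proj_comul_of_mem_zero hΔ hπ_id hu) hy,
    map_zero, zero_add, zero_add] at hcoassoc
  rwa [hy_eq]

include hΔ hπ_id hπ_orth in
theorem assoc_map_comul_proj_comul_left_right (hm : m ∈ gr 1) :
    TensorProduct.assoc k H H H
        (map (map (π 0) (π 1) ∘ₗ comul) LinearMap.id (map (π 1) (π 0) (comul (R := k) m)))
      = map LinearMap.id (map (π 1) (π 0) ∘ₗ comul) (map (π 0) (π 1) (comul (R := k) m)) := by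
  obtain ⟨x, hx, y, hy, hxy, hx_eq, hy_eq⟩ := exists_comul_eq_add hΔ hπ_id hπ_orth hm
  have hcoassoc := assoc_map_comp_comul_map (π 0) (π 1) (π 0) m
  rw [hxy, map_add, map_add, map_add, map_proj_right_eq_zero hπ_orth _ zero_ne_one hx,
    map_proj_right hπ_id _ hy, map_proj_left hπ_id _ hx,
    map_proj_left_eq_zero hπ_orth _ zero_ne_one hy, map_zero, zero_add, add_zero] at hcoassoc
  rwa [hx_eq, hy_eq]

end Bialgebra

end GradedBialgebra

open GradedBialgebra

theorem stmt_13_general {k H : Type*} [CommRing k] [Ring H] [HopfAlgebra k H]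
    (gr : ℕ → Submodule k H)
    (hmul : ∀ i j : ℕ, ∀ x ∈ gr i, ∀ y ∈ gr j, x * y ∈ gr (i + j))
    (π : ℕ → (H →ₗ[k] H))
    (hπ_id : ∀ n : ℕ, ∀ x ∈ gr n, π n x = x)
    (hπ_orth : ∀ m n : ℕ, m ≠ n → ∀ x ∈ gr n, π m x = 0)
    (hΔ : ∀ n : ℕ, ∀ x ∈ gr n, comul (R := k) x ∈
      ⨆ p ∈ Finset.HasAntidiagonal.antidiagonal n,
        LinearMap.range (TensorProduct.map (gr p.1).subtype (gr p.2).subtype))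
    (hε : ∀ n : ℕ, 0 < n → ∀ x ∈ gr n, counit (R := k) x = 0) :
    let P01 : H ⊗[k] H →ₗ[k] H ⊗[k] H := TensorProduct.map (π 0) (π 1)
    let P10 : H ⊗[k] H →ₗ[k] H ⊗[k] H := TensorProduct.map (π 1) (π 0)
    -- bimodule structure
    (∀ b ∈ gr 0, ∀ m ∈ gr 1, b * m ∈ gr 1 ∧ m * b ∈ gr 1) ∧
    -- the coactions are B-bimodule maps
    (∀ b ∈ gr 0, ∀ m ∈ gr 1,
      P01 (comul (R := k) (b * m)) = comul (R := k) b * P01 (comul (R := k) m) ∧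
      P01 (comul (R := k) (m * b)) = P01 (comul (R := k) m) * comul (R := k) b ∧
      P10 (comul (R := k) (b * m)) = comul (R := k) b * P10 (comul (R := k) m) ∧
      P10 (comul (R := k) (m * b)) = P10 (comul (R := k) m) * comul (R := k) b) ∧
    -- counit laws, coassociativity and the bicomodule compatibility
    (∀ m ∈ gr 1,
      (TensorProduct.lid k H) ((TensorProduct.map (counit (R := k)) LinearMap.id)
        (P01 (comul (R := k) m))) = m ∧
      (TensorProduct.rid k H) ((TensorProduct.map LinearMap.id (counit (R := k)))
        (P10 (comul (R := k) m))) = m ∧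
      (TensorProduct.assoc k H H H)
          ((TensorProduct.map (comul (R := k)) LinearMap.id) (P01 (comul (R := k) m)))
        = (TensorProduct.map LinearMap.id (P01 ∘ₗ comul (R := k))) (P01 (comul (R := k) m)) ∧
      (TensorProduct.assoc k H H H)
          ((TensorProduct.map (P10 ∘ₗ comul (R := k)) LinearMap.id) (P10 (comul (R := k) m)))
        = (TensorProduct.map LinearMap.id (comul (R := k))) (P10 (comul (R := k) m)) ∧
      (TensorProduct.assoc k H H H)
          ((TensorProduct.map (P01 ∘ₗ comul (R := k)) LinearMap.id) (P10 (comul (R := k) m)))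
        = (TensorProduct.map LinearMap.id (P10 ∘ₗ comul (R := k))) (P01 (comul (R := k) m))) := by
  intro P01 P10
  exact ⟨fun b hb m hm => ⟨hmul 0 1 b hb m hm, hmul 1 0 m hm b hb⟩,
    fun b hb m hm => map_proj_comul_mul_of_mem hΔ hπ_id hπ_orth hmul hb hm,
    fun m hm => ⟨lid_map_counit_proj_comul hΔ hπ_id hπ_orth hε hm,
      rid_map_counit_proj_comul hΔ hπ_id hπ_orth hε hm,
      assoc_map_comul_proj_comul_left hΔ hπ_id hπ_orth hm,
      assoc_map_comul_proj_comul_right hΔ hπ_id hπ_orth hm,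
      assoc_map_comul_proj_comul_left_right hΔ hπ_id hπ_orth hm⟩⟩

/-- Let `H = ⊕_{n≥0} H_{(n)}` be a graded Hopf algebra (grading `gr`, with linear
projections `π n` onto the components, graded multiplication, comultiplication and
counit).  Then `M := H_{(1)}` is a Hopf bimodule over `B := H_{(0)}`, with actions
`α⁻ = π₁∘μ∘(ι₀⊗ι₁)`, `α⁺ = π₁∘μ∘(ι₁⊗ι₀)` (i.e. multiplication maps `B⊗M` and `M⊗B`
into `M`) and coactions `δ⁻ = (π₀⊗π₁)∘Δ∘ι₁`, `δ⁺ = (π₁⊗π₀)∘Δ∘ι₁`: the coactions are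
counital and coassociative bicomodule structures, and are `B`-bimodule maps. -/
theorem stmt_13 {k H : Type*} [CommRing k] [Ring H] [HopfAlgebra k H]
    (gr : ℕ → Submodule k H)
    (hone : (1 : H) ∈ gr 0)
    (hmul : ∀ i j : ℕ, ∀ x ∈ gr i, ∀ y ∈ gr j, x * y ∈ gr (i + j))
    (hsup : (⨆ n, gr n) = ⊤)
    (π : ℕ → (H →ₗ[k] H))
    (hπ_mem : ∀ (n : ℕ) (x : H), π n x ∈ gr n)
    (hπ_id : ∀ n : ℕ, ∀ x ∈ gr n, π n x = x)
    (hπ_orth : ∀ m n : ℕ, m ≠ n → ∀ x ∈ gr n, π m x = 0)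
    (hΔ : ∀ n : ℕ, ∀ x ∈ gr n, comul (R := k) x ∈
      ⨆ p ∈ Finset.HasAntidiagonal.antidiagonal n,
        LinearMap.range (TensorProduct.map (gr p.1).subtype (gr p.2).subtype))
    (hε : ∀ n : ℕ, 0 < n → ∀ x ∈ gr n, counit (R := k) x = 0) :
    let P01 : H ⊗[k] H →ₗ[k] H ⊗[k] H := TensorProduct.map (π 0) (π 1)
    let P10 : H ⊗[k] H →ₗ[k] H ⊗[k] H := TensorProduct.map (π 1) (π 0)
    -- bimodule structure
    (∀ b ∈ gr 0, ∀ m ∈ gr 1, b * m ∈ gr 1 ∧ m * b ∈ gr 1) ∧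
    -- the coactions are B-bimodule maps
    (∀ b ∈ gr 0, ∀ m ∈ gr 1,
      P01 (comul (R := k) (b * m)) = comul (R := k) b * P01 (comul (R := k) m) ∧
      P01 (comul (R := k) (m * b)) = P01 (comul (R := k) m) * comul (R := k) b ∧
      P10 (comul (R := k) (b * m)) = comul (R := k) b * P10 (comul (R := k) m) ∧
      P10 (comul (R := k) (m * b)) = P10 (comul (R := k) m) * comul (R := k) b) ∧
    -- counit laws, coassociativity and the bicomodule compatibility
    (∀ m ∈ gr 1,
      (TensorProduct.lid k H) ((TensorProduct.map (counit (R := k)) LinearMap.id)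
        (P01 (comul (R := k) m))) = m ∧
      (TensorProduct.rid k H) ((TensorProduct.map LinearMap.id (counit (R := k)))
        (P10 (comul (R := k) m))) = m ∧
      (TensorProduct.assoc k H H H)
          ((TensorProduct.map (comul (R := k)) LinearMap.id) (P01 (comul (R := k) m)))
        = (TensorProduct.map LinearMap.id (P01 ∘ₗ comul (R := k))) (P01 (comul (R := k) m)) ∧
      (TensorProduct.assoc k H H H)
          ((TensorProduct.map (P10 ∘ₗ comul (R := k)) LinearMap.id) (P10 (comul (R := k) m)))
        = (TensorProduct.map LinearMap.id (comul (R := k))) (P10 (comul (R := k) m)) ∧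
      (TensorProduct.assoc k H H H)
          ((TensorProduct.map (P01 ∘ₗ comul (R := k)) LinearMap.id) (P10 (comul (R := k) m)))
        = (TensorProduct.map LinearMap.id (P10 ∘ₗ comul (R := k))) (P01 (comul (R := k) m))) :=
  stmt_13_general gr hmul π hπ_id hπ_orth hΔ hε
end

section
/- Let H = ⊕_{i≥0} H_{(i)} be a graded Hopf algebra with B = H_{(0)}, π₀: H → B the projection and ι₀: B → H the inclusion. Define ω = id_H * (ι₀π₀S) (convolution product). Then R := {h ∈ H | (id⊗π₀)Δ(h) = h ⊗ 1} satisfies R = Im(ω) and Δ(R) ⊆ H ⊗ R, i.e. R is a left coideal subalgebra of H. -/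
/-!
The degree-zero projection `p = π 0` is an idempotent bialgebra endomorphism of `H`: being
multiplicative and compatible with `Δ` and `ε` only has to be checked on homogeneous elements.
Everything else holds for any such `p`. The set `R` is the equalizer of the algebra maps
`δ = (id ⊗ p) ∘ Δ` and `x ↦ x ⊗ 1`, hence a subalgebra. As `p ∘ S = S ∘ p`, we have
`ω = μ ∘ (id ⊗ S) ∘ δ`, so `ω` fixes `R` pointwise; by coassociativity this upgrades to
`(id ⊗ ω) (Δ h) = Δ h` for `h ∈ R`, which gives `Δ(R) ⊆ H ⊗ R`. Finally `δ ∘ ω = ω ⊗ 1` is an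
identity in the convolution algebra of linear maps `H → H ⊗ H`.
-/

open TensorProduct Coalgebra WithConv

namespace AlgHom

variable {k H A : Type*} [CommSemiring k] [Semiring H] [HopfAlgebra k H] [Semiring A]
  [Algebra k A]

theorem toConv_comp_antipode_mul_toConv (φ : H →ₐ[k] A) :
    toConv (φ.toLinearMap ∘ₗ HopfAlgebra.antipode k) * toConv φ.toLinearMap = 1 := by
  have := LinearMap.algHom_comp_convMul_distrib φ
      (toConv (HopfAlgebra.antipode k)) (toConv LinearMap.id)
  rw [LinearMap.antipode_mul_id] at this
  refine WithConv.ext (this.symm.trans ?_)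
  ext; simp

theorem toConv_mul_toConv_comp_antipode (φ : H →ₐ[k] A) :
    toConv φ.toLinearMap * toConv (φ.toLinearMap ∘ₗ HopfAlgebra.antipode k) = 1 := by
  have := LinearMap.algHom_comp_convMul_distrib φ
      (toConv LinearMap.id) (toConv (HopfAlgebra.antipode k))
  rw [LinearMap.id_mul_antipode] at this
  refine WithConv.ext (this.symm.trans ?_)
  ext; simp

end AlgHom

section Antipode

variable {k A B : Type*} [CommSemiring k] [Semiring A] [Semiring B] [HopfAlgebra k A]
  [HopfAlgebra k B]

theorem CoalgHom.toConv_mul_toConv_antipode_comp (f : A →ₗc[k] B) :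
    toConv (f : A →ₗ[k] B) * toConv (HopfAlgebra.antipode k ∘ₗ (f : A →ₗ[k] B)) = 1 := by
  have := LinearMap.convMul_comp_coalgHom_distrib
      (toConv LinearMap.id) (toConv (HopfAlgebra.antipode k)) f
  rw [LinearMap.id_mul_antipode] at this
  refine WithConv.ext (this.symm.trans ?_)
  ext; simp

theorem BialgHom.toLinearMap_comp_antipode (f : A →ₐc[k] B) :
    (f : A →ₗ[k] B) ∘ₗ HopfAlgebra.antipode k = HopfAlgebra.antipode k ∘ₗ (f : A →ₗ[k] B) :=
  congrArg ofConv <| left_inv_eq_right_inv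
    (AlgHom.toConv_comp_antipode_mul_toConv (f : A →ₐ[k] B))
    (CoalgHom.toConv_mul_toConv_antipode_comp (f : A →ₗc[k] B))

end Antipode

theorem LinearMap.toConv_map_comp_comul {k C A B : Type*} [CommSemiring k] [AddCommMonoid C]
    [Module k C] [Coalgebra k C] [Semiring A] [Algebra k A] [Semiring B] [Algebra k B]
    (f : C →ₗ[k] A) (g : C →ₗ[k] B) :
    toConv (map f g ∘ₗ comul) =
      toConv ((Algebra.TensorProduct.includeLeft : A →ₐ[k] A ⊗[k] B).toLinearMap ∘ₗ f) *
        toConv ((Algebra.TensorProduct.includeRight : B →ₐ[k] A ⊗[k] B).toLinearMap ∘ₗ g) := by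
  have hmul : LinearMap.mul' k (A ⊗[k] B) ∘ₗ
      map (Algebra.TensorProduct.includeLeft : A →ₐ[k] A ⊗[k] B).toLinearMap
        (Algebra.TensorProduct.includeRight : B →ₐ[k] A ⊗[k] B).toLinearMap = LinearMap.id :=
    TensorProduct.ext' fun a b => by simp
  apply WithConv.ext
  rw [LinearMap.convMul_def, ofConv_toConv, ofConv_toConv, ofConv_toConv, map_comp,
    ← LinearMap.comp_assoc, ← LinearMap.comp_assoc, hmul, LinearMap.id_comp]

namespace HopfAlgebra

variable {k H : Type*} [CommSemiring k] [Semiring H] [HopfAlgebra k H] (p : H →ₐc[k] H)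

noncomputable def coaction : H →ₐ[k] H ⊗[k] H :=
  (Algebra.TensorProduct.map (AlgHom.id k H) (p : H →ₐ[k] H)).comp (Bialgebra.comulAlgHom k H)

noncomputable def coinvariants : Subalgebra k H :=
  AlgHom.equalizer (coaction p) Algebra.TensorProduct.includeLeft

noncomputable def coinvariantsProj : H →ₗ[k] H :=
  LinearMap.mul' k H ∘ₗ ((p : H →ₗ[k] H) ∘ₗ antipode k).lTensor H ∘ₗ comul

theorem coaction_toLinearMap :
    (coaction p).toLinearMap = (p : H →ₗ[k] H).lTensor H ∘ₗ comul := rfl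

theorem coinvariantsProj_eq :
    coinvariantsProj p = LinearMap.mul' k H ∘ₗ (antipode k).lTensor H ∘ₗ
      (coaction p).toLinearMap := by
  rw [coinvariantsProj, coaction_toLinearMap, BialgHom.toLinearMap_comp_antipode,
    LinearMap.lTensor_comp, LinearMap.comp_assoc]

variable {p} in
theorem coinvariantsProj_apply_of_mem {x : H} (hx : x ∈ coinvariants p) :
    coinvariantsProj p x = x := by
  rw [coinvariantsProj_eq, LinearMap.comp_apply, LinearMap.comp_apply, AlgHom.toLinearMap_apply,
    (AlgHom.mem_equalizer _ _ x).mp hx]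
  simp

theorem lTensor_coaction_comp_comul :
    (coaction p).toLinearMap.lTensor H ∘ₗ comul =
      (TensorProduct.assoc k H H H).toLinearMap ∘ₗ comul.rTensor H ∘ₗ
        (coaction p).toLinearMap := by
  rw [coaction_toLinearMap, LinearMap.lTensor_comp, LinearMap.comp_assoc, ← Coalgebra.coassoc]
  have hnat : ((p : H →ₗ[k] H).lTensor H).lTensor H ∘ₗ
      (TensorProduct.assoc k H H H).toLinearMap ∘ₗ comul.rTensor H =
        (TensorProduct.assoc k H H H).toLinearMap ∘ₗ comul.rTensor H ∘ₗ
          (p : H →ₗ[k] H).lTensor H := by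
    apply TensorProduct.ext'
    intro a b
    simp only [LinearMap.comp_apply, LinearMap.rTensor_tmul, LinearMap.lTensor_tmul]
    induction comul (R := k) a using TensorProduct.induction_on with
    | zero => simp
    | tmul c d => simp
    | add u v hu hv => simp only [TensorProduct.add_tmul, map_add, hu, hv]
  simp only [← LinearMap.comp_assoc] at hnat ⊢
  rw [hnat]

theorem coaction_comp_coinvariantsProj (hp : IsIdempotentElem p) :
    (coaction p).toLinearMap ∘ₗ coinvariantsProj p =
      (Algebra.TensorProduct.includeLeft : H →ₐ[k] H ⊗[k] H).toLinearMap ∘ₗ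
        coinvariantsProj p := by
  -- `δ = iL * (iR ∘ p)` and `Δ ∘ p = (iL ∘ p) * (iR ∘ p)` has inverse `Δ ∘ p ∘ S`, while
  -- `iL ∘ p ∘ S` is a left inverse of `iL ∘ p`; so `δ * (Δ ∘ p ∘ S) = iL * (iL ∘ p ∘ S)`.
  set P : H →ₗ[k] H := (p : H →ₗ[k] H)
  set iL := (Algebra.TensorProduct.includeLeft : H →ₐ[k] H ⊗[k] H).toLinearMap
  set iR := (Algebra.TensorProduct.includeRight : H →ₐ[k] H ⊗[k] H).toLinearMap
  set c : H →ₐ[k] H ⊗[k] H := (Bialgebra.comulAlgHom k H).comp (p : H →ₐ[k] H)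
  have hc : toConv c.toLinearMap = toConv (iL ∘ₗ P) * toConv (iR ∘ₗ P) := by
    rw [← LinearMap.toConv_map_comp_comul]
    exact congrArg toConv (CoalgHomClass.map_comp_comul p).symm
  have hδ : toConv (coaction p).toLinearMap = toConv iL * toConv (iR ∘ₗ P) :=
    LinearMap.toConv_map_comp_comul LinearMap.id P
  have hδp : (coaction p).toLinearMap ∘ₗ P = c.toLinearMap := by
    have hPP : P ∘ₗ P = P := congrArg (fun q : H →ₐc[k] H => (q : H →ₗ[k] H)) hp
    rw [coaction_toLinearMap, LinearMap.comp_assoc, ← CoalgHomClass.map_comp_comul p,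
      ← LinearMap.comp_assoc, LinearMap.lTensor, ← map_comp, LinearMap.id_comp, hPP]
    exact CoalgHomClass.map_comp_comul p
  have hL : toConv (iL ∘ₗ P ∘ₗ antipode k) * toConv (iL ∘ₗ P) = 1 :=
    AlgHom.toConv_comp_antipode_mul_toConv
      (Algebra.TensorProduct.includeLeft.comp (p : H →ₐ[k] H))
  have hR : toConv (iR ∘ₗ P) = toConv (iL ∘ₗ P ∘ₗ antipode k) * toConv c.toLinearMap := by
    rw [hc, ← mul_assoc, hL, one_mul]
  apply WithConv.toConv_injective
  calc toConv ((coaction p).toLinearMap ∘ₗ coinvariantsProj p)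
      = toConv (coaction p).toLinearMap * toConv (c.toLinearMap ∘ₗ antipode k) := by
        rw [← hδp, LinearMap.comp_assoc]
        exact congrArg toConv (LinearMap.algHom_comp_convMul_distrib (coaction p) _ _)
    _ = toConv iL * toConv (iL ∘ₗ P ∘ₗ antipode k) := by
        rw [hδ, hR, mul_assoc, mul_assoc, AlgHom.toConv_mul_toConv_comp_antipode, mul_one]
    _ = toConv (iL ∘ₗ coinvariantsProj p) :=
        congrArg toConv (LinearMap.algHom_comp_convMul_distrib Algebra.TensorProduct.includeLeft
          (toConv LinearMap.id) (toConv (P ∘ₗ antipode k))).symm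

theorem coinvariantsProj_mem (hp : IsIdempotentElem p) (x : H) :
    coinvariantsProj p x ∈ coinvariants p :=
  (AlgHom.mem_equalizer _ _ _).mpr (LinearMap.congr_fun (coaction_comp_coinvariantsProj p hp) x)

theorem range_coinvariantsProj (hp : IsIdempotentElem p) :
    LinearMap.range (coinvariantsProj p) = Subalgebra.toSubmodule (coinvariants p) := by
  apply le_antisymm
  · rintro _ ⟨x, rfl⟩
    exact coinvariantsProj_mem p hp x
  · intro x hx
    exact ⟨x, coinvariantsProj_apply_of_mem hx⟩

theorem lTensor_coinvariantsProj_comul_of_mem {x : H} (hx : x ∈ coinvariants p) :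
    (coinvariantsProj p).lTensor H (comul x) = comul x := by
  have hunit : ∀ u : H ⊗[k] H, (LinearMap.mul' k H ∘ₗ (antipode k).lTensor H).lTensor H
      (TensorProduct.assoc k H H H (u ⊗ₜ 1)) = u := by
    intro u
    induction u using TensorProduct.induction_on with
    | zero => simp
    | tmul a b => simp
    | add u v hu hv => simp only [TensorProduct.add_tmul, map_add, hu, hv]
  rw [coinvariantsProj_eq, ← LinearMap.comp_assoc, LinearMap.lTensor_comp, LinearMap.comp_apply,
    ← LinearMap.comp_apply (g := comul), lTensor_coaction_comp_comul]
  simp only [LinearMap.comp_apply, AlgHom.toLinearMap_apply, (AlgHom.mem_equalizer _ _ x).mp hx,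
    Algebra.TensorProduct.includeLeft_apply, LinearMap.rTensor_tmul, LinearEquiv.coe_coe]
  exact hunit _

theorem comul_mem_range_lTensor_of_mem (hp : IsIdempotentElem p) {x : H}
    (hx : x ∈ coinvariants p) :
    comul x ∈ LinearMap.range ((Subalgebra.toSubmodule (coinvariants p)).subtype.lTensor H) := by
  let ω' := (coinvariantsProj p).codRestrict (Subalgebra.toSubmodule (coinvariants p))
    (coinvariantsProj_mem p hp)
  refine ⟨ω'.lTensor H (comul x), ?_⟩
  rw [← LinearMap.comp_apply, ← LinearMap.lTensor_comp, LinearMap.subtype_comp_codRestrict,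
    lTensor_coinvariantsProj_comul_of_mem p hx]

end HopfAlgebra

theorem LinearMap.ext_of_iSup_eq_top {k M N ι : Type*} [Semiring k] [AddCommMonoid M]
    [Module k M] [AddCommMonoid N] [Module k N] {p : ι → Submodule k M} (hp : ⨆ i, p i = ⊤)
    {f g : M →ₗ[k] N} (h : ∀ i, ∀ x ∈ p i, f x = g x) : f = g :=
  LinearMap.eqLocus_eq_top.mp <| top_le_iff.mp <|
    hp ▸ iSup_le fun i => LinearMap.le_eqLocus.mpr (h i)

namespace DegreeZeroProj

section Module

variable {k H : Type*} [CommSemiring k] [AddCommMonoid H] [Module k H] {gr : ℕ → Submodule k H}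
  {e : H →ₗ[k] H}

theorem apply_of_mem (he₀ : ∀ x ∈ gr 0, e x = x) (he : ∀ n ≠ 0, ∀ x ∈ gr n, e x = 0) {n : ℕ}
    {x : H} (hx : x ∈ gr n) : e x = if n = 0 then x else 0 := by
  split_ifs with hn
  · exact he₀ x (hn ▸ hx)
  · exact he n hn x hx

theorem comp_self (he_mem : ∀ x, e x ∈ gr 0) (he₀ : ∀ x ∈ gr 0, e x = x) : e ∘ₗ e = e :=
  LinearMap.ext fun x => he₀ _ (he_mem x)

theorem map_comul_of_mem_iSup_antidiagonal (he₀ : ∀ x ∈ gr 0, e x = x)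
    (he : ∀ n ≠ 0, ∀ x ∈ gr n, e x = 0) {n : ℕ} {t : H ⊗[k] H}
    (ht : t ∈ ⨆ q ∈ Finset.HasAntidiagonal.antidiagonal n,
      LinearMap.range (TensorProduct.map (gr q.1).subtype (gr q.2).subtype)) :
    map e e t = if n = 0 then t else 0 := by
  suffices hle : ⨆ q ∈ Finset.HasAntidiagonal.antidiagonal n,
      LinearMap.range (TensorProduct.map (gr q.1).subtype (gr q.2).subtype) ≤
        LinearMap.eqLocus (map e e) (if n = 0 then LinearMap.id else 0) by
    have := LinearMap.mem_eqLocus.mp (hle ht)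
    split_ifs at this ⊢ <;> simpa using this
  refine iSup₂_le fun q hq => ?_
  rintro _ ⟨t, rfl⟩
  rw [Finset.HasAntidiagonal.mem_antidiagonal] at hq
  induction t using TensorProduct.induction_on with
  | zero => simp
  | tmul a b =>
    simp only [LinearMap.mem_eqLocus, map_tmul, Submodule.subtype_apply,
      apply_of_mem he₀ he a.2, apply_of_mem he₀ he b.2]
    split_ifs <;> simp_all
  | add u v hu hv => rw [map_add]; exact Submodule.add_mem _ hu hv

variable [CoalgebraStruct k H]

theorem counit_apply (hsup : ⨆ n, gr n = ⊤) (he₀ : ∀ x ∈ gr 0, e x = x)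
    (he : ∀ n ≠ 0, ∀ x ∈ gr n, e x = 0) (hε : ∀ n : ℕ, 0 < n → ∀ x ∈ gr n, counit (R := k) x = 0)
    (x : H) : counit (R := k) (e x) = counit x :=
  LinearMap.congr_fun (LinearMap.ext_of_iSup_eq_top hsup (f := counit ∘ₗ e) (g := counit)
    fun n x hx => by
      rw [LinearMap.comp_apply, apply_of_mem he₀ he hx]
      split_ifs with hn
      · rfl
      · rw [map_zero, hε n (Nat.pos_of_ne_zero hn) x hx]) x

theorem comul_apply (hsup : ⨆ n, gr n = ⊤) (he₀ : ∀ x ∈ gr 0, e x = x)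
    (he : ∀ n ≠ 0, ∀ x ∈ gr n, e x = 0)
    (hΔ : ∀ n : ℕ, ∀ x ∈ gr n, comul (R := k) x ∈
      ⨆ p ∈ Finset.HasAntidiagonal.antidiagonal n,
        LinearMap.range (TensorProduct.map (gr p.1).subtype (gr p.2).subtype))
    (x : H) : comul (R := k) (e x) = map e e (comul x) :=
  LinearMap.congr_fun (LinearMap.ext_of_iSup_eq_top hsup (f := comul ∘ₗ e)
    (g := map e e ∘ₗ comul) fun n x hx => by
      rw [LinearMap.comp_apply, LinearMap.comp_apply,
        map_comul_of_mem_iSup_antidiagonal he₀ he (hΔ n x hx), apply_of_mem he₀ he hx]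
      split_ifs <;> simp) x

end Module

variable {k H : Type*} [CommSemiring k] [Semiring H] [Algebra k H] {gr : ℕ → Submodule k H}
  {e : H →ₗ[k] H}

theorem map_mul (hsup : ⨆ n, gr n = ⊤)
    (hmul : ∀ i j : ℕ, ∀ x ∈ gr i, ∀ y ∈ gr j, x * y ∈ gr (i + j))
    (he₀ : ∀ x ∈ gr 0, e x = x) (he : ∀ n ≠ 0, ∀ x ∈ gr n, e x = 0) (x y : H) :
    e (x * y) = e x * e y := by
  have homogeneous : ∀ i, ∀ x ∈ gr i, ∀ j, ∀ y ∈ gr j, e (x * y) = e x * e y := by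
    intro i x hx j y hy
    rw [apply_of_mem he₀ he hx, apply_of_mem he₀ he hy, apply_of_mem he₀ he (hmul i j x hx y hy)]
    split_ifs <;> simp_all
  have left_homogeneous : ∀ i, ∀ x ∈ gr i, e (x * y) = e x * e y := fun i x hx =>
    LinearMap.congr_fun (LinearMap.ext_of_iSup_eq_top hsup (f := e ∘ₗ LinearMap.mulLeft k x)
      (g := LinearMap.mulLeft k (e x) ∘ₗ e) (homogeneous i x hx)) y
  exact LinearMap.congr_fun (LinearMap.ext_of_iSup_eq_top hsup (f := e ∘ₗ LinearMap.mulRight k y)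
    (g := LinearMap.mulRight k (e y) ∘ₗ e) left_homogeneous) x

end DegreeZeroProj

open HopfAlgebra in
theorem stmt_14_general {k H : Type*} [CommRing k] [Ring H] [HopfAlgebra k H]
    (gr : ℕ → Submodule k H)
    (hone : (1 : H) ∈ gr 0)
    (hmul : ∀ i j : ℕ, ∀ x ∈ gr i, ∀ y ∈ gr j, x * y ∈ gr (i + j))
    (hsup : (⨆ n, gr n) = ⊤)
    (π : ℕ → (H →ₗ[k] H))
    (hπ_mem : ∀ (n : ℕ) (x : H), π n x ∈ gr n)
    (hπ_id : ∀ n : ℕ, ∀ x ∈ gr n, π n x = x)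
    (hπ_orth : ∀ m n : ℕ, m ≠ n → ∀ x ∈ gr n, π m x = 0)
    (hΔ : ∀ n : ℕ, ∀ x ∈ gr n, comul (R := k) x ∈
      ⨆ p ∈ Finset.HasAntidiagonal.antidiagonal n,
        LinearMap.range (TensorProduct.map (gr p.1).subtype (gr p.2).subtype))
    (hε : ∀ n : ℕ, 0 < n → ∀ x ∈ gr n, counit (R := k) x = 0) :
    let ω : H →ₗ[k] H := LinearMap.mul' k H
      ∘ₗ TensorProduct.map LinearMap.id ((π 0) ∘ₗ HopfAlgebra.antipode (R := k))
      ∘ₗ comul (R := k)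
    let R : Submodule k H := LinearMap.ker
      ((TensorProduct.map LinearMap.id (π 0)) ∘ₗ comul (R := k)
        - (TensorProduct.mk k H H).flip 1)
    LinearMap.range ω = R ∧
    (∀ h ∈ R, comul (R := k) h ∈
      LinearMap.range (TensorProduct.map (LinearMap.id : H →ₗ[k] H) R.subtype)) ∧
    (1 : H) ∈ R ∧
    (∀ a ∈ R, ∀ b ∈ R, a * b ∈ R) := by
  intro ω R
  have he : ∀ n ≠ 0, ∀ x ∈ gr n, π 0 x = 0 := fun n hn => hπ_orth 0 n hn.symm
  let p : H →ₐc[k] H := BialgHom.ofAlgHom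
    (AlgHom.ofLinearMap (π 0) (hπ_id 0 1 hone) (DegreeZeroProj.map_mul hsup hmul (hπ_id 0) he))
    (AlgHom.ext (DegreeZeroProj.counit_apply hsup (hπ_id 0) he hε))
    (AlgHom.ext fun x => (DegreeZeroProj.comul_apply hsup (hπ_id 0) he hΔ x).symm)
  have hp : IsIdempotentElem p :=
    BialgHom.coe_linearMap_injective (DegreeZeroProj.comp_self (hπ_mem 0) (hπ_id 0))
  have hR : R = Subalgebra.toSubmodule (coinvariants p) :=
    (LinearMap.eqLocus_eq_ker_sub _ _).symm
  have hω : ω = coinvariantsProj p := rfl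
  rw [hω, hR]
  exact ⟨range_coinvariantsProj p hp, fun h hh => comul_mem_range_lTensor_of_mem p hp hh,
    Subalgebra.one_mem _, fun _ ha _ hb => Subalgebra.mul_mem _ ha hb⟩

/-- Let `H = ⊕_{n≥0} H_{(n)}` be a graded Hopf algebra with `B = H_{(0)}`, projection
`π 0 : H → B ⊆ H` and `ω := id_H * (ι₀π₀S)` (convolution).  Then the set of right
`B`-coinvariants `R = {h | (id ⊗ π₀)Δ(h) = h ⊗ 1}` equals `Im(ω)`, satisfies
`Δ(R) ⊆ H ⊗ R`, and is a subalgebra of `H` containing `1` (a left coideal subalgebra). -/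
theorem stmt_14 {k H : Type*} [CommRing k] [Ring H] [HopfAlgebra k H]
    (gr : ℕ → Submodule k H)
    (hone : (1 : H) ∈ gr 0)
    (hmul : ∀ i j : ℕ, ∀ x ∈ gr i, ∀ y ∈ gr j, x * y ∈ gr (i + j))
    (hsup : (⨆ n, gr n) = ⊤)
    (π : ℕ → (H →ₗ[k] H))
    (hπ_mem : ∀ (n : ℕ) (x : H), π n x ∈ gr n)
    (hπ_id : ∀ n : ℕ, ∀ x ∈ gr n, π n x = x)
    (hπ_orth : ∀ m n : ℕ, m ≠ n → ∀ x ∈ gr n, π m x = 0)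
    (hΔ : ∀ n : ℕ, ∀ x ∈ gr n, comul (R := k) x ∈
      ⨆ p ∈ Finset.HasAntidiagonal.antidiagonal n,
        LinearMap.range (TensorProduct.map (gr p.1).subtype (gr p.2).subtype))
    (hε : ∀ n : ℕ, 0 < n → ∀ x ∈ gr n, counit (R := k) x = 0)
    (hS : ∀ x ∈ gr 0, HopfAlgebra.antipode (R := k) x ∈ gr 0) :
    let ω : H →ₗ[k] H := LinearMap.mul' k H
      ∘ₗ TensorProduct.map LinearMap.id ((π 0) ∘ₗ HopfAlgebra.antipode (R := k))
      ∘ₗ comul (R := k)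
    let R : Submodule k H := LinearMap.ker
      ((TensorProduct.map LinearMap.id (π 0)) ∘ₗ comul (R := k)
        - (TensorProduct.mk k H H).flip 1)
    LinearMap.range ω = R ∧
    (∀ h ∈ R, comul (R := k) h ∈
      LinearMap.range (TensorProduct.map (LinearMap.id : H →ₗ[k] H) R.subtype)) ∧
    (1 : H) ∈ R ∧
    (∀ a ∈ R, ∀ b ∈ R, a * b ∈ R) :=
  stmt_14_general gr hone hmul hsup π hπ_mem hπ_id hπ_orth hΔ hε
end
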